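/- arXiv:2604.19493 — 2 statements merged into one kernel-verified Lean document; each statement's English description precedes it below -/
import Mathlib

section
/- The multivariate generalised Gaussian density integrates to one: for every integer m ≥ 1, every β > 0, every μ ∈ ℝ^m and every symmetric positive definite m×m real matrix Σ, one has ∫_{ℝ^m} [βΓ(m/2) / (π^{m/2} Γ(m/(2β)) 2^{m/(2β)} (det Σ)^{1/2})] · exp(−(1/2)((x−μ)ᵀ Σ^{−1} (x−μ))^β) dx = 1, where the integral is with respect to Lebesgue measure on ℝ^m. -/
open MeasureTheory Matrix Real
open scoped MatrixOrder

/-!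
Translating by `μ` and substituting `x = S^{1/2} y`, of Jacobian `√(det S)`, turns the integral
into `∫ exp(-(1/2)‖y‖^{2β}) dy` over Euclidean space. In polar coordinates this is `m` times the
volume `π^{m/2} / Γ(m/2 + 1)` of the unit ball times the Gamma integral
`∫₀^∞ r^{m-1} exp(-r^{2β}/2) dr = 2^{m/(2β)} Γ(m/(2β)) / (2β)`.
-/

namespace Matrix

variable {ι : Type*} [Fintype ι] [DecidableEq ι]

theorem integral_comp_mulVec {E : Type*} [NormedAddCommGroup E] [NormedSpace ℝ E]
    {A : Matrix ι ι ℝ} (hA : A.det ≠ 0) (f : (ι → ℝ) → E) :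
    ∫ y, f (A *ᵥ y) = |A.det|⁻¹ • ∫ x, f x := by
  have hdet : LinearMap.det (toLin' A) ≠ 0 := by rwa [LinearMap.det_toLin']
  let e :=
    ((toLin' A).equivOfDetNeZero hdet).toContinuousLinearEquiv.toHomeomorph.toMeasurableEquiv
  calc ∫ y, f (A *ᵥ y) = ∫ y, f (e y) := rfl
    _ = ∫ x, f x ∂(volume.map (toLin' A)) := (integral_map_equiv e f).symm
    _ = |A.det|⁻¹ • ∫ x, f x := by
      rw [Real.map_matrix_volume_pi_eq_smul_volume_pi hA, integral_smul_measure,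
        ENNReal.toReal_ofReal (by positivity), abs_inv]

variable {S : Matrix ι ι ℝ}

theorem PosDef.isUnit_det_sqrt (hS : S.PosDef) : IsUnit (CFC.sqrt S).det :=
  isUnit_of_mul_isUnit_left (by
    rw [← det_mul, CFC.sqrt_mul_sqrt_self S hS.posSemidef.nonneg]; exact hS.det_pos.ne'.isUnit)

theorem PosDef.sqrt_mulVec_dotProduct_inv_mulVec (hS : S.PosDef) (y : ι → ℝ) :
    (CFC.sqrt S *ᵥ y) ⬝ᵥ (S⁻¹ *ᵥ (CFC.sqrt S *ᵥ y)) = y ⬝ᵥ y := by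
  set A := CFC.sqrt S
  have hA : IsUnit A.det := hS.isUnit_det_sqrt
  have hAt : Aᵀ = A := (CFC.sqrt_nonneg S).posSemidef.isHermitian.eq
  have hAA : A * A = S := CFC.sqrt_mul_sqrt_self S hS.posSemidef.nonneg
  rw [← hAA, mul_inv_rev, mulVec_mulVec, Matrix.mul_assoc, nonsing_inv_mul _ hA, Matrix.mul_one,
    dotProduct_comm, dotProduct_mulVec, ← mulVec_transpose, hAt, mulVec_mulVec,
    mul_nonsing_inv _ hA, one_mulVec]

theorem PosDef.sqrt_det_eq_abs_det_sqrt (hS : S.PosDef) : √S.det = |(CFC.sqrt S).det| := by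
  rw [← Real.sqrt_sq_eq_abs, sq, ← det_mul, CFC.sqrt_mul_sqrt_self S hS.posSemidef.nonneg]

theorem PosDef.integral_comp_inv_quadForm {E : Type*} [NormedAddCommGroup E] [NormedSpace ℝ E]
    (hS : S.PosDef) (μ : ι → ℝ) (g : ℝ → E) :
    ∫ x, g ((x - μ) ⬝ᵥ (S⁻¹ *ᵥ (x - μ))) = √S.det • ∫ y : ι → ℝ, g (y ⬝ᵥ y) := by
  have hA := hS.isUnit_det_sqrt
  rw [integral_sub_right_eq_self (fun x ↦ g (x ⬝ᵥ (S⁻¹ *ᵥ x))), hS.sqrt_det_eq_abs_det_sqrt]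
  simp_rw [← hS.sqrt_mulVec_dotProduct_inv_mulVec]
  rw [integral_comp_mulVec hA.ne_zero (fun x ↦ g (x ⬝ᵥ (S⁻¹ *ᵥ x))), smul_smul,
    mul_inv_cancel₀ (abs_ne_zero.2 hA.ne_zero), one_smul]

end Matrix

theorem integral_comp_dotProduct_self {ι E : Type*} [Fintype ι] [NormedAddCommGroup E]
    [NormedSpace ℝ E] (g : ℝ → E) :
    ∫ y : ι → ℝ, g (y ⬝ᵥ y) = ∫ x : EuclideanSpace ℝ ι, g (‖x‖ ^ 2) := by
  rw [← (EuclideanSpace.volume_preserving_symm_measurableEquiv_toLp ι).integral_comp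
    (MeasurableEquiv.toLp 2 (ι → ℝ)).symm.measurableEmbedding]
  congr! 2 with x
  rw [EuclideanSpace.norm_eq, Real.sq_sqrt (by positivity)]
  simp [dotProduct, sq]

open Fintype in
theorem EuclideanSpace.integral_exp_neg_mul_norm_rpow {ι : Type*} [Fintype ι] [Nonempty ι]
    {b p : ℝ} (hb : 0 < b) (hp : 0 < p) :
    ∫ x : EuclideanSpace ℝ ι, exp (-b * ‖x‖ ^ p) =
      π ^ (card ι / 2 : ℝ) * Gamma (card ι / p + 1) /
        (Gamma (card ι / 2 + 1) * b ^ (card ι / p : ℝ)) := by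
  have hn : (0 : ℝ) < card ι := by exact_mod_cast card_pos
  have hradial : ∫ r in Set.Ioi (0 : ℝ), r ^ (card ι - 1) • exp (-b * r ^ p) =
      b ^ (-card ι / p : ℝ) * (1 / p) * Gamma (card ι / p) := by
    have hpow : ∀ r ∈ Set.Ioi (0 : ℝ), r ^ (card ι - 1) • exp (-b * r ^ p) =
        r ^ ((card ι : ℝ) - 1) * exp (-b * r ^ p) := fun r _ ↦ by
      rw [smul_eq_mul, ← rpow_natCast, Nat.cast_sub card_pos, Nat.cast_one]
    rw [setIntegral_congr_fun measurableSet_Ioi hpow,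
      integral_rpow_mul_exp_neg_mul_rpow hp (by linarith) hb, sub_add_cancel]
  have hball : volume.real (Metric.ball (0 : EuclideanSpace ℝ ι) 1) =
      π ^ (card ι / 2 : ℝ) / Gamma (card ι / 2 + 1) := by
    rw [measureReal_def, EuclideanSpace.volume_ball, ENNReal.ofReal_one, one_pow, one_mul,
      ENNReal.toReal_ofReal (by positivity), sqrt_eq_rpow, ← rpow_natCast, ← rpow_mul pi_pos.le]
    ring_nf
  rw [integral_fun_norm_addHaar volume (fun r ↦ exp (-b * r ^ p)), finrank_euclideanSpace,
    hradial, hball, nsmul_eq_mul, smul_eq_mul, neg_div, rpow_neg hb.le,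
    Gamma_add_one (s := card ι / p) (by positivity),
    Gamma_add_one (s := card ι / 2) (by positivity)]
  field_simp

open Fintype in
theorem integral_exp_neg_mul_dotProduct_self_rpow {ι : Type*} [Fintype ι] [Nonempty ι]
    {b β : ℝ} (hb : 0 < b) (hβ : 0 < β) :
    ∫ y : ι → ℝ, exp (-b * (y ⬝ᵥ y) ^ β) =
      π ^ (card ι / 2 : ℝ) * Gamma (card ι / (2 * β) + 1) /
        (Gamma (card ι / 2 + 1) * b ^ (card ι / (2 * β) : ℝ)) := by
  rw [integral_comp_dotProduct_self (fun t ↦ exp (-b * t ^ β)),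
    ← EuclideanSpace.integral_exp_neg_mul_norm_rpow hb (by positivity)]
  simp_rw [← rpow_natCast, ← rpow_mul (norm_nonneg _), Nat.cast_ofNat]

/-- The multivariate generalised Gaussian density integrates to one:
for every integer `m ≥ 1`, every `β > 0`, every `μ ∈ ℝ^m` and every symmetric positive
definite `m × m` real matrix `Σ`,
`∫_{ℝ^m} [β Γ(m/2) / (π^{m/2} Γ(m/(2β)) 2^{m/(2β)} (det Σ)^{1/2})]
    exp(−(1/2)((x−μ)ᵀ Σ⁻¹ (x−μ))^β) dx = 1`,
with respect to Lebesgue measure on `ℝ^m`. -/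
theorem mggd_density_integrates_to_one
    (m : ℕ) (hm : 1 ≤ m) (β : ℝ) (hβ : 0 < β)
    (μ : Fin m → ℝ) (S : Matrix (Fin m) (Fin m) ℝ) (hS : S.PosDef) :
    ∫ x : Fin m → ℝ,
      (β * Real.Gamma ((m : ℝ) / 2) /
          (Real.pi ^ ((m : ℝ) / 2) * Real.Gamma ((m : ℝ) / (2 * β)) *
            (2 : ℝ) ^ ((m : ℝ) / (2 * β)) * Real.sqrt S.det)) *
        Real.exp (-(1 / 2) * ((x - μ) ⬝ᵥ (S⁻¹ *ᵥ (x - μ))) ^ β) = 1 := by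
  have : Nonempty (Fin m) := ⟨⟨0, hm⟩⟩
  have hm₀ : (0 : ℝ) < m := by exact_mod_cast hm
  rw [integral_const_mul, hS.integral_comp_inv_quadForm μ (fun t ↦ exp (-(1 / 2) * t ^ β)),
    smul_eq_mul, integral_exp_neg_mul_dotProduct_self_rpow one_half_pos hβ, Fintype.card_fin,
    Gamma_add_one (by positivity), Gamma_add_one (by positivity), one_div, inv_rpow two_pos.le]
  have hdet := hS.det_pos
  field_simp
end

section
/- Let m ≥ 1 be an integer, β > 0, μ ∈ ℝ^m, and Σ a symmetric positive definite m×m real matrix, and let X be distributed according to the MGGD(μ, Σ, β) density. Then the random variable W = (1/2)((X−μ)ᵀ Σ^{−1} (X−μ))^β has the Gamma distribution with shape m/(2β) and unit scale; that is, the pushforward of MGGD(μ, Σ, β) under x ↦ (1/2)((x−μ)ᵀ Σ^{−1} (x−μ))^β is the probability measure on (0, ∞) with Lebesgue density w ↦ w^{m/(2β)−1} e^{−w} / Γ(m/(2β)). -/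
open MeasureTheory Matrix Real

/-- The MGGD(μ, Σ, β) measure on ℝ^m: the measure with Lebesgue density
`[β Γ(m/2) / (π^{m/2} Γ(m/(2β)) 2^{m/(2β)} (det Σ)^{1/2})]
  exp(−(1/2)((x−μ)ᵀ Σ⁻¹ (x−μ))^β)`. -/
noncomputable def mggd (m : ℕ) (μ : Fin m → ℝ) (S : Matrix (Fin m) (Fin m) ℝ) (β : ℝ) :
    Measure (Fin m → ℝ) :=
  volume.withDensity fun x => ENNReal.ofReal
    (β * Real.Gamma ((m : ℝ) / 2) /
        (Real.pi ^ ((m : ℝ) / 2) * Real.Gamma ((m : ℝ) / (2 * β)) *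
          (2 : ℝ) ^ ((m : ℝ) / (2 * β)) * Real.sqrt S.det) *
      Real.exp (-(1 / 2) * ((x - μ) ⬝ᵥ (S⁻¹ *ᵥ (x - μ))) ^ β))

/-!
Write `Σ = A Aᵀ`. The substitution `x = μ + A y` turns `(x−μ)ᵀ Σ⁻¹ (x−μ)` into `‖y‖²` at the
cost of the Jacobian `|det A| = √(det Σ)`, so the law of `W` is computed from a radial integral.
Polar coordinates reduce it to an integral against `r^{m−1} dr`, weighted by the area
`2π^{m/2}/Γ(m/2)` of the unit sphere, and the substitution `w = r^{2β}/2` turns `r^{m−1} dr` into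
a constant multiple of `w^{m/(2β)−1} dw`. The normalising constant of the MGGD is exactly the one
that makes this multiple `1/Γ(m/(2β))`.
-/

open Measure Set Metric Module

open scoped MatrixOrder

section

variable {ι : Type*} [Fintype ι]

theorem lintegral_comp_dotProduct_self_eq_lintegral_comp_norm_sq (F : ℝ → ENNReal) :
    ∫⁻ y : ι → ℝ, F (y ⬝ᵥ y) = ∫⁻ z : EuclideanSpace ℝ ι, F (‖z‖ ^ 2) := by
  rw [← (PiLp.volume_preserving_ofLp ι).lintegral_comp_emb
    (MeasurableEquiv.toLp 2 (ι → ℝ)).symm.measurableEmbedding]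
  simp [EuclideanSpace.real_norm_sq_eq, dotProduct, ← sq]

variable [DecidableEq ι]

theorem Matrix.mulVec_dotProduct_inv_mul_transpose_mulVec {A : Matrix ι ι ℝ} (hA : IsUnit A.det)
    (y : ι → ℝ) : (A *ᵥ y) ⬝ᵥ ((A * Aᵀ)⁻¹ *ᵥ (A *ᵥ y)) = y ⬝ᵥ y := by
  have hAt : IsUnit Aᵀ.det := by rwa [det_transpose]
  rw [dotProduct_comm, dotProduct_mulVec, ← mulVec_transpose, mulVec_mulVec, mulVec_mulVec,
    mul_inv_rev, ← Matrix.mul_assoc, mul_nonsing_inv _ hAt, Matrix.one_mul,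
    nonsing_inv_mul _ hA, one_mulVec]

theorem Matrix.PosSemidef.exists_eq_mul_transpose {S : Matrix ι ι ℝ} (hS : S.PosSemidef) :
    ∃ A : Matrix ι ι ℝ, S = A * Aᵀ := by
  obtain ⟨B, rfl⟩ := CStarAlgebra.nonneg_iff_eq_star_mul_self.mp hS.nonneg
  exact ⟨Bᵀ, by
    rw [transpose_transpose, star_eq_conjTranspose, conjTranspose_eq_transpose_of_trivial]⟩

theorem lintegral_eq_abs_det_mul_lintegral_comp_add_mulVec {A : Matrix ι ι ℝ}
    (hA : IsUnit A.det) (v : ι → ℝ) (g : (ι → ℝ) → ENNReal) :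
    ∫⁻ x, g x = ENNReal.ofReal |A.det| * ∫⁻ y, g (v + A *ᵥ y) := by
  let L := LinearMap.toContinuousLinearMap (toLin' A)
  have hL : ∀ y ∈ univ, HasFDerivWithinAt (fun y => v + A *ᵥ y) L univ y := fun y _ =>
    (L.hasFDerivAt.const_add v).hasFDerivWithinAt
  have hinj : InjOn (fun y => v + A *ᵥ y) univ := fun y _ z _ h => by
    simpa [mulVec_mulVec, nonsing_inv_mul _ hA] using congrArg (A⁻¹ *ᵥ ·) (add_left_cancel h)
  have hsurj : (fun y => v + A *ᵥ y) '' univ = univ := by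
    refine eq_univ_of_forall fun x => ⟨A⁻¹ *ᵥ (x - v), trivial, ?_⟩
    simp [mulVec_mulVec, mul_nonsing_inv _ hA]
  have hjac := lintegral_image_eq_lintegral_abs_det_fderiv_mul volume MeasurableSet.univ hL hinj g
  rw [hsurj, restrict_univ] at hjac
  rw [hjac, lintegral_const_mul' _ _ ENNReal.ofReal_ne_top]
  simp [L, LinearMap.det_toLin']

theorem Matrix.PosDef.lintegral_comp_dotProduct_inv_mulVec_sub {S : Matrix ι ι ℝ}
    (hS : S.PosDef) (μ : ι → ℝ) (F : ℝ → ENNReal) :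
    ∫⁻ x : ι → ℝ, F ((x - μ) ⬝ᵥ (S⁻¹ *ᵥ (x - μ))) =
      ENNReal.ofReal √S.det * ∫⁻ y : ι → ℝ, F (y ⬝ᵥ y) := by
  obtain ⟨A, rfl⟩ := hS.posSemidef.exists_eq_mul_transpose
  have hdet : (A * Aᵀ).det = A.det ^ 2 := by rw [det_mul, det_transpose, sq]
  have hA : IsUnit A.det := by
    rw [isUnit_iff_ne_zero, ← pow_ne_zero_iff two_ne_zero, ← hdet]
    exact hS.det_pos.ne'
  rw [lintegral_eq_abs_det_mul_lintegral_comp_add_mulVec hA μ, hdet, sqrt_sq_eq_abs]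
  simp_rw [add_sub_cancel_left, mulVec_dotProduct_inv_mul_transpose_mulVec hA]

end

theorem lintegral_fun_norm_addHaar {E : Type*} [NormedAddCommGroup E] [NormedSpace ℝ E]
    [MeasurableSpace E] [BorelSpace E] [FiniteDimensional ℝ E] [Nontrivial E]
    (μ : Measure E) [μ.IsAddHaarMeasure] {f : ℝ → ENNReal} (hf : Measurable f) :
    ∫⁻ x, f ‖x‖ ∂μ = finrank ℝ E * μ (ball 0 1) *
      ∫⁻ r in Ioi (0 : ℝ), ENNReal.ofReal (r ^ (finrank ℝ E - 1)) * f r := by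
  calc
    ∫⁻ x, f ‖x‖ ∂μ = ∫⁻ x : ({(0)}ᶜ : Set E), f ‖x.1‖ ∂(μ.comap (↑)) := by
      rw [lintegral_subtype_comap (measurableSet_singleton _).compl fun x => f ‖x‖,
        restrict_compl_singleton]
    _ = ∫⁻ p : sphere (0 : E) 1 × Ioi (0 : ℝ), f p.2
          ∂μ.toSphere.prod (.volumeIoiPow (finrank ℝ E - 1)) := by
      simpa [homeomorphUnitSphereProd, homeomorphSphereProd] using
        μ.measurePreserving_homeomorphUnitSphereProd.lintegral_comp_emb
          (Homeomorph.measurableEmbedding _) (fun p => f p.2)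
    _ = μ.toSphere univ * ∫⁻ r : Ioi (0 : ℝ), f r ∂(.volumeIoiPow (finrank ℝ E - 1)) := by
      rw [lintegral_prod (fun p : sphere (0 : E) 1 × Ioi (0 : ℝ) => f p.2)
        (hf.comp (measurable_subtype_coe.comp measurable_snd)).aemeasurable]
      simp [lintegral_const, mul_comm]
    _ = _ := by
      rw [toSphere_apply_univ, volumeIoiPow,
        lintegral_withDensity_eq_lintegral_mul _ (measurable_subtype_coe.pow_const _).ennreal_ofReal
          (by exact hf.comp measurable_subtype_coe),
        ← lintegral_subtype_comap measurableSet_Ioi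
          (fun r => ENNReal.ofReal (r ^ (finrank ℝ E - 1)) * f r)]
      rfl

theorem InnerProductSpace.lintegral_fun_norm_volume {E : Type*} [NormedAddCommGroup E]
    [InnerProductSpace ℝ E] [MeasurableSpace E] [BorelSpace E] [FiniteDimensional ℝ E]
    [Nontrivial E] {f : ℝ → ENNReal} (hf : Measurable f) :
    ∫⁻ x : E, f ‖x‖ =
      ENNReal.ofReal (2 * π ^ (finrank ℝ E / 2 : ℝ) / Gamma (finrank ℝ E / 2)) *
        ∫⁻ r in Ioi (0 : ℝ), ENNReal.ofReal (r ^ (finrank ℝ E - 1)) * f r := by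
  set n := finrank ℝ E
  have hn : (0 : ℝ) < n := Nat.cast_pos.mpr finrank_pos
  have hsphere : n * (√π ^ n / Gamma (n / 2 + 1)) = 2 * π ^ (n / 2 : ℝ) / Gamma (n / 2) := by
    rw [Gamma_add_one (by positivity), sqrt_eq_rpow, ← rpow_natCast, ← rpow_mul pi_pos.le]
    field_simp
  rw [lintegral_fun_norm_addHaar volume hf, InnerProductSpace.volume_ball, ENNReal.ofReal_one,
    one_pow, one_mul, ← ENNReal.ofReal_natCast, ← ENNReal.ofReal_mul n.cast_nonneg, hsphere]

theorem lintegral_Ioi_pow_mul_comp_const_mul_rpow (n : ℕ) {c s : ℝ} (hc : 0 < c) (hs : 0 < s)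
    (h : ℝ → ENNReal) :
    ∫⁻ r in Ioi 0, ENNReal.ofReal (r ^ n) * h (c * r ^ s) =
      ENNReal.ofReal (s * c ^ ((n + 1) / s))⁻¹ *
        ∫⁻ w in Ioi 0, ENNReal.ofReal (w ^ ((n + 1) / s - 1)) * h w := by
  set k : ℝ := (n + 1) / s
  have himage : (fun r => c * r ^ s) '' Ioi 0 = Ioi 0 := by
    refine Subset.antisymm (image_subset_iff.2 fun r (hr : 0 < r) => by
      simp only [mem_preimage, mem_Ioi]; positivity) fun w (hw : 0 < w) => ?_
    refine ⟨(w / c) ^ s⁻¹, by simp only [mem_Ioi]; positivity, ?_⟩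
    simp only
    rw [← rpow_mul (by positivity), inv_mul_cancel₀ hs.ne', rpow_one, mul_div_cancel₀ _ hc.ne']
  have hinj : InjOn (fun r => c * r ^ s) (Ioi 0) := fun r hr t ht h =>
    rpow_left_injOn hs.ne' (mem_Ioi.mp hr).le (mem_Ioi.mp ht).le (mul_left_cancel₀ hc.ne' h)
  have hderiv : ∀ r ∈ Ioi (0 : ℝ),
      HasDerivWithinAt (fun r => c * r ^ s) (c * (s * r ^ (s - 1))) (Ioi 0) r := fun r hr =>
    ((hasDerivAt_rpow_const (Or.inl (ne_of_gt hr))).const_mul c).hasDerivWithinAt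
  have hsubst := lintegral_image_eq_lintegral_abs_deriv_mul measurableSet_Ioi hderiv hinj
    fun w => ENNReal.ofReal (w ^ (k - 1)) * h w
  have hjac : ∀ r : ℝ, 0 < r →
      |c * (s * r ^ (s - 1))| * (c * r ^ s) ^ (k - 1) = s * c ^ k * r ^ n := by
    intro r hr
    have hexp : s * (k - 1) + (s - 1) = n := by simp only [k]; field_simp; ring
    rw [abs_of_pos (by positivity), mul_rpow hc.le (by positivity), ← rpow_mul hr.le]
    calc c * (s * r ^ (s - 1)) * (c ^ (k - 1) * r ^ (s * (k - 1)))
        = s * (c ^ (1 : ℝ) * c ^ (k - 1)) * (r ^ (s * (k - 1)) * r ^ (s - 1)) := by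
          rw [rpow_one]; ring
      _ = s * c ^ k * r ^ n := by rw [← rpow_add hc, ← rpow_add hr, hexp, rpow_natCast]; ring_nf
  have hintegrand : ∀ r ∈ Ioi (0 : ℝ),
      ENNReal.ofReal |c * (s * r ^ (s - 1))| *
          (ENNReal.ofReal ((c * r ^ s) ^ (k - 1)) * h (c * r ^ s)) =
        ENNReal.ofReal (s * c ^ k) * (ENNReal.ofReal (r ^ n) * h (c * r ^ s)) := fun r hr => by
    rw [← mul_assoc, ← ENNReal.ofReal_mul (abs_nonneg _), hjac r hr,
      ENNReal.ofReal_mul (by positivity), mul_assoc]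
  rw [himage, setLIntegral_congr_fun measurableSet_Ioi hintegrand,
    lintegral_const_mul' _ _ ENNReal.ofReal_ne_top] at hsubst
  rw [hsubst, ← mul_assoc, ← ENNReal.ofReal_mul (by positivity),
    inv_mul_cancel₀ (by positivity), ENNReal.ofReal_one, one_mul]

theorem Matrix.PosDef.lintegral_comp_half_rpow_dotProduct_inv_mulVec_sub {ι : Type*} [Fintype ι]
    [DecidableEq ι] [Nonempty ι] {S : Matrix ι ι ℝ} (hS : S.PosDef) (μ : ι → ℝ) {β : ℝ}
    (hβ : 0 < β) {h : ℝ → ENNReal} (hh : Measurable h) :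
    ∫⁻ x : ι → ℝ, h (1 / 2 * ((x - μ) ⬝ᵥ (S⁻¹ *ᵥ (x - μ))) ^ β) =
      ENNReal.ofReal (√S.det * (2 * π ^ ((Fintype.card ι : ℝ) / 2) / Gamma (Fintype.card ι / 2)) *
          (2 * β * (1 / 2) ^ ((Fintype.card ι : ℝ) / (2 * β)))⁻¹) *
        ∫⁻ w in Ioi 0, ENNReal.ofReal (w ^ ((Fintype.card ι : ℝ) / (2 * β) - 1)) * h w := by
  have hdim : (((Fintype.card ι - 1 : ℕ) : ℝ) + 1) = Fintype.card ι := by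
    rw [Nat.cast_sub Fintype.card_pos, Nat.cast_one, sub_add_cancel]
  rw [hS.lintegral_comp_dotProduct_inv_mulVec_sub μ (fun q => h (1 / 2 * q ^ β)),
    lintegral_comp_dotProduct_self_eq_lintegral_comp_norm_sq fun q => h (1 / 2 * q ^ β)]
  simp_rw [← rpow_natCast, ← rpow_mul (norm_nonneg _)]
  rw [InnerProductSpace.lintegral_fun_norm_volume (f := fun r => h (1 / 2 * r ^ ((2 : ℕ) * β)))
      (hh.comp (by fun_prop)), finrank_euclideanSpace,
    lintegral_Ioi_pow_mul_comp_const_mul_rpow _ one_half_pos (by positivity), hdim,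
    ← mul_assoc, ← mul_assoc, ← ENNReal.ofReal_mul (by positivity),
    ← ENNReal.ofReal_mul (by positivity)]
  norm_num

noncomputable def mggdConst (m : ℕ) (S : Matrix (Fin m) (Fin m) ℝ) (β : ℝ) : ℝ :=
  β * Gamma ((m : ℝ) / 2) /
    (π ^ ((m : ℝ) / 2) * Gamma ((m : ℝ) / (2 * β)) * (2 : ℝ) ^ ((m : ℝ) / (2 * β)) * √S.det)

theorem sqrt_det_mul_mggdConst {m : ℕ} (hm : 0 < m) {β : ℝ} (hβ : 0 < β)
    {S : Matrix (Fin m) (Fin m) ℝ} (hS : 0 < S.det) :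
    √S.det * (2 * π ^ ((m : ℝ) / 2) / Gamma ((m : ℝ) / 2)) *
        (2 * β * (1 / 2) ^ ((m : ℝ) / (2 * β)))⁻¹ * mggdConst m S β =
      (Gamma ((m : ℝ) / (2 * β)))⁻¹ := by
  have hm' : (0 : ℝ) < m := Nat.cast_pos.mpr hm
  have hΓm : 0 < Gamma ((m : ℝ) / 2) := Gamma_pos_of_pos (by positivity)
  have hΓa : 0 < Gamma ((m : ℝ) / (2 * β)) := Gamma_pos_of_pos (by positivity)
  have hhalf : (1 / 2 : ℝ) ^ ((m : ℝ) / (2 * β)) * 2 ^ ((m : ℝ) / (2 * β)) = 1 := by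
    rw [← mul_rpow (by norm_num) (by norm_num)]; norm_num
  have hsqrt : 0 < √S.det := sqrt_pos.mpr hS
  have hpi : 0 < π ^ ((m : ℝ) / 2) := rpow_pos_of_pos pi_pos _
  unfold mggdConst
  field_simp
  linear_combination -hhalf

/-- if `X ~ MGGD(μ, Σ, β)` then `W = (1/2)((X−μ)ᵀ Σ⁻¹ (X−μ))^β` has the
Gamma distribution with shape `m/(2β)` and unit scale: the pushforward of `MGGD(μ, Σ, β)`
under `x ↦ (1/2)((x−μ)ᵀ Σ⁻¹ (x−μ))^β` is the measure on `(0, ∞)` with Lebesgue density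
`w ↦ w^{m/(2β)−1} e^{−w} / Γ(m/(2β))`. -/
theorem mggd_radial_gamma
    (m : ℕ) (hm : 1 ≤ m) (β : ℝ) (hβ : 0 < β)
    (μ : Fin m → ℝ) (S : Matrix (Fin m) (Fin m) ℝ) (hS : S.PosDef) :
    Measure.map (fun x : Fin m → ℝ => (1 / 2) * ((x - μ) ⬝ᵥ (S⁻¹ *ᵥ (x - μ))) ^ β)
        (mggd m μ S β)
      = (volume.restrict (Set.Ioi (0 : ℝ))).withDensity fun w => ENNReal.ofReal
          (w ^ ((m : ℝ) / (2 * β) - 1) * Real.exp (-w) / Real.Gamma ((m : ℝ) / (2 * β))) := by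
  have : Nonempty (Fin m) := ⟨⟨0, hm⟩⟩
  refine Measure.ext_of_lintegral _ fun g hg => ?_
  set h : ℝ → ENNReal := fun w => ENNReal.ofReal (mggdConst m S β * exp (-w)) * g w
  have hradial := hS.lintegral_comp_half_rpow_dotProduct_inv_mulVec_sub μ hβ (h := h) (by fun_prop)
  rw [Fintype.card_fin] at hradial
  calc ∫⁻ w, g w ∂(mggd m μ S β).map _
      = ∫⁻ x, h (1 / 2 * ((x - μ) ⬝ᵥ (S⁻¹ *ᵥ (x - μ))) ^ β) := by
        rw [lintegral_map hg (by fun_prop), mggd,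
          lintegral_withDensity_eq_lintegral_mul _ (by fun_prop) (by fun_prop)]
        simp [h, mggdConst, neg_mul]
    _ = ∫⁻ w in Ioi 0, ENNReal.ofReal
          (w ^ ((m : ℝ) / (2 * β) - 1) * exp (-w) / Gamma ((m : ℝ) / (2 * β))) * g w := by
        rw [hradial, ← lintegral_const_mul' _ _ ENNReal.ofReal_ne_top]
        refine setLIntegral_congr_fun measurableSet_Ioi fun w (hw : 0 < w) => ?_
        rw [← mul_assoc, ← mul_assoc, ← ENNReal.ofReal_mul (by positivity),
          ← ENNReal.ofReal_mul (by positivity)]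
        congr 2
        linear_combination (w ^ ((m : ℝ) / (2 * β) - 1) * exp (-w)) *
          sqrt_det_mul_mggdConst hm hβ hS.det_pos
    _ = _ := (lintegral_withDensity_eq_lintegral_mul _ (by fun_prop) hg).symm
end
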